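/- The group R4 = (C3 ≀ S8)^° ×_sign S24 × S24 has order 16972688908618238933770849245964147960401887232000000000. -/

import Mathlib

open Equiv

/-- The automorphism of `(Z/n)^m` (written multiplicatively) permuting coordinates by `σ`. -/
def permAut (n m : ℕ) (σ : Equiv.Perm (Fin m)) :
    MulAut (Fin m → Multiplicative (ZMod n)) :=
  { Equiv.piCongrLeft' (fun _ => Multiplicative (ZMod n)) σ with
    map_mul' := fun _ _ => rfl }

/-- The action of `S_m` on `(Z/n)^m` permuting coordinates. -/
def permHom (n m : ℕ) : Equiv.Perm (Fin m) →* MulAut (Fin m → Multiplicative (ZMod n)) where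
  toFun := permAut n m
  map_one' := by ext x i; rfl
  map_mul' := fun σ τ => by ext x i; rfl

/-- The wreath product `C_n ≀ S_m = (Z/n)^m ⋊ S_m`, where `S_m` permutes coordinates. -/
abbrev Wr (n m : ℕ) :=
  SemidirectProduct (Fin m → Multiplicative (ZMod n)) (Equiv.Perm (Fin m)) (permHom n m)

/-- The homomorphism `C_n ≀ S_m → Z/n`, `(x, σ) ↦ ∑ i, x i`. -/
def sumHom (n m : ℕ) : Wr n m →* Multiplicative (ZMod n) :=
  SemidirectProduct.lift
    (MonoidHom.mk' (fun x => ∏ i, x i) (by intro a b; simp [Finset.prod_mul_distrib]))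
    1
    (by
      intro σ
      refine MonoidHom.ext fun x => ?_
      first
        | simpa using Equiv.prod_comp σ.symm x
        | (simp; exact Equiv.prod_comp σ.symm x)
        | exact Equiv.prod_comp σ.symm x)

/-- `(C_n ≀ S_m)^°`, the kernel of `(x, σ) ↦ ∑ i, x i`. -/
abbrev WrO (n m : ℕ) : Subgroup (Wr n m) := (sumHom n m).ker

/-- The sign homomorphism `(C_n ≀ S_m)^° → {±1}`, `(x, σ) ↦ sign σ`. -/
def signW (n m : ℕ) : ↥(WrO n m) →* ℤˣ :=
  (Equiv.Perm.sign.comp SemidirectProduct.rightHom).comp (WrO n m).subtype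

/-- The fiber product `G ×_{φ,ψ} H = {(a, b) : φ a = ψ b}` of two group homomorphisms,
as a subgroup of the direct product `G × H`. -/
def fiberProduct {G H K : Type*} [Group G] [Group H] [Group K]
    (φ : G →* K) (ψ : H →* K) : Subgroup (G × H) where
  carrier := {p | φ p.1 = ψ p.2}
  one_mem' := by simp
  mul_mem' := by
    intro a b ha hb
    simp only [Set.mem_setOf_eq, Prod.fst_mul, Prod.snd_mul, map_mul] at *
    rw [ha, hb]
  inv_mem' := by
    intro a ha
    simp only [Set.mem_setOf_eq, Prod.fst_inv, Prod.snd_inv, map_inv] at *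
    rw [ha]

/-- The Revenge Cube group `R4 = ((C3 ≀ S8)^° ×_sign S24) × S24`. -/
abbrev RevengeR4 :=
  ↥(fiberProduct (signW 3 8) (Equiv.Perm.sign : Equiv.Perm (Fin 24) →* ℤˣ)) ×
    Equiv.Perm (Fin 24)

/-! The sum map `C₃ ≀ S₈ → ℤ/3` is onto, so `(C₃ ≀ S₈)^°` has order `3⁷ · 8!`. A fibre product
over a surjection onto an abelian group `K` is the kernel of the surjection `(a, b) ↦ φ a / ψ b`,
so it has order `|G| |H| / |K|`; with the sign of `S₂₄` onto `{±1}` this gives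
`|R4| = (3⁷ · 8! · 24! / 2) · 24!`. -/

theorem MonoidHom.card_ker_mul_card_of_surjective {G K : Type*} [Group G] [Group K]
    (f : G →* K) (hf : Function.Surjective f) : Nat.card f.ker * Nat.card K = Nat.card G := by
  rw [← f.ker.card_mul_index, Subgroup.index_ker, f.range_eq_top_of_surjective hf,
    Subgroup.card_top]

section FiberProduct

variable {G H K : Type*} [Group G] [Group H] [CommGroup K] (φ : G →* K) (ψ : H →* K)

theorem fiberProduct_eq_ker_div :
    fiberProduct φ ψ = (φ.comp (MonoidHom.fst G H) / ψ.comp (MonoidHom.snd G H)).ker := by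
  ext p
  simp [fiberProduct, div_eq_one]

theorem card_fiberProduct_mul_card (hψ : Function.Surjective ψ) :
    Nat.card (fiberProduct φ ψ) * Nat.card K = Nat.card G * Nat.card H := by
  rw [fiberProduct_eq_ker_div, MonoidHom.card_ker_mul_card_of_surjective, Nat.card_prod]
  intro k
  obtain ⟨h, hh⟩ := hψ k⁻¹
  exact ⟨(1, h), by simp [hh]⟩

end FiberProduct

theorem sumHom_surjective (n : ℕ) {m : ℕ} (hm : m ≠ 0) : Function.Surjective (sumHom n m) := by
  intro g
  refine ⟨SemidirectProduct.inl (Pi.mulSingle ⟨0, Nat.pos_of_ne_zero hm⟩ g), ?_⟩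
  simp [sumHom]

theorem card_WrO_mul (n : ℕ) [NeZero n] {m : ℕ} (hm : m ≠ 0) :
    Nat.card (WrO n m) * n = n ^ m * m.factorial := by
  simpa [Fintype.card_perm] using
    (sumHom n m).card_ker_mul_card_of_surjective (sumHom_surjective n hm)

/-- The Revenge Cube group `R4 = ((C3 ≀ S8)^° ×_sign S24) × S24` has order
`16972688908618238933770849245964147960401887232000000000`. -/
theorem revenge_R4_card :
    Nat.card RevengeR4 =
      16972688908618238933770849245964147960401887232000000000 := by
  have hWrO : Nat.card (WrO 3 8) * 3 = 3 ^ 8 * Nat.factorial 8 := card_WrO_mul 3 (by decide)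
  have hfib := card_fiberProduct_mul_card (signW 3 8) Perm.sign (Perm.sign_surjective (Fin 24))
  rw [Nat.card_prod]
  generalize Nat.card (WrO 3 8) = b at *
  generalize Nat.card (fiberProduct (signW 3 8) (Perm.sign : Perm (Fin 24) →* ℤˣ)) = a at *
  rw [Nat.card_perm, Nat.card_fin] at hfib ⊢
  rw [Nat.card_eq_fintype_card, Fintype.card_units_int] at hfib
  norm_num [Nat.factorial] at hWrO hfib ⊢
  omega
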